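/- In the Chu construction Chu(H,0) extended to quantifiers over a complete Heyting algebra H, the Frobenius law for the multiplicative conjunction holds: P ⊗ ⨆ᵢ Qᵢ = ⨆ᵢ (P ⊗ Qᵢ), where ⊗ is the Chu tensor and the existential quantifier is (⨆ᵢ Qᵢ) = (∃i. Qᵢ⁺, ∀i. Qᵢ⁻). -/
import Mathlib


/-- A point of `Chu(H,0)`: a pair `(P⁺, P⁻)` with `P⁺ ⊓ P⁻ = ⊥`. -/
def IsChu {H : Type*} [Order.Frame H] (P : H × H) : Prop := P.1 ⊓ P.2 = ⊥

/-- `P ⊗ Q = (P⁺ ∧ Q⁺, (P⁺ → Q⁻) ∧ (Q⁺ → P⁻))`. -/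
def chuTensor {H : Type*} [Order.Frame H] (P Q : H × H) : H × H :=
  (P.1 ⊓ Q.1, (P.1 ⇨ Q.2) ⊓ (Q.1 ⇨ P.2))

/-- The existential quantifier in `Chu(H,0)`:
`⨆ᵢ Qᵢ = (∃ i, Qᵢ⁺, ∀ i, Qᵢ⁻)`. -/
def chuiSup {H : Type*} [Order.Frame H] {ι : Type*} (Q : ι → H × H) : H × H :=
  (⨆ i, (Q i).1, ⨅ i, (Q i).2)


lemma himp_iInf' {H : Type*} [Order.Frame H] {ι : Type*} (a : H) (f : ι → H) :
    a ⇨ ⨅ i, f i = ⨅ i, a ⇨ f i := by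
  refine le_antisymm (le_iInf fun i => himp_le_himp_left (iInf_le _ i)) ?_
  rw [le_himp_iff, le_iInf_iff]
  exact fun i => (inf_le_inf_right a (iInf_le _ i)).trans (himp_inf_le)

lemma iSup_himp' {H : Type*} [Order.Frame H] {ι : Type*} (f : ι → H) (a : H) :
    (⨆ i, f i) ⇨ a = ⨅ i, f i ⇨ a := by
  refine le_antisymm (le_iInf fun i => himp_le_himp_right (le_iSup _ i)) ?_
  rw [le_himp_iff, inf_iSup_eq]
  exact iSup_le fun i => (inf_le_inf_right _ (iInf_le _ i)).trans himp_inf_le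

/-- The Frobenius law for the multiplicative conjunction in `Chu(H,0)` over a
complete Heyting algebra: `P ⊗ ⨆ᵢ Qᵢ = ⨆ᵢ (P ⊗ Qᵢ)`. -/
theorem chu_frobenius {H : Type*} [Order.Frame H] {ι : Type*}
    (P : H × H) (Q : ι → H × H) (hP : IsChu P) (hQ : ∀ i, IsChu (Q i)) :
    chuTensor P (chuiSup Q) = chuiSup (fun i => chuTensor P (Q i)) := by
  unfold chuTensor chuiSup
  refine Prod.ext ?_ ?_
  · simpa using inf_iSup_eq P.1 fun i => (Q i).1
  · simp only [himp_iInf', iSup_himp', iInf_inf_eq]
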